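/- Let (A, H) be a matched pair of finite quasigroupoids and K a field. The vector space K[A]⋈K[H] spanned by pairs a⊗h with s_A(a) = t_H(h), with product (a⊗h)(b⊗g) = a•φ_A(h,b) ⊗ φ_H(h,b)⋆g if s_H(h) = t_A(b) and 0 otherwise, unit Σ_{x∈A₀} id_A(x)⊗id_H(x), counit ε(a⊗h) = 1, coproduct δ(a⊗h) = (a⊗h)⊗(a⊗h), and antipode λ(a⊗h) = φ_A(λ_H(h),λ_A(a)) ⊗ φ_H(λ_H(h),λ_A(a)), is a cocommutative weak Hopf quasigroup with target Π^L(a⊗h) = id_A(t_A(a))⊗id_H(t_A(a)) and source Π^R(a⊗h) = id_A(s_H(h))⊗id_H(s_H(h)). -/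

import Mathlib

/-!
The pairs `(a, h)` with `s_A a = t_H h` form a quasigroupoid `A ⋈ H` in their own right: the
product is the one of the basis of `K[A] ⋈ K[H]`, the inverse of `(a, h)` is `λ(a ⊗ h)`, and the
identities are `id_A(x) ⊗ id_H(x)`. The matched-pair axioms are exactly what is needed for the
quasigroupoid axioms; the key identities are `φ_A(λ_H k, φ_A(k, b)) = b` and
`φ_H(λ_H k, φ_A(k, b)) = λ_H(φ_H(k, b))`, obtained from the module conditions by acting with
`λ_H k ⋆ k = id_H`. So `K[A] ⋈ K[H]` is the quasigroupoid algebra of `A ⋈ H` with the grouplike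
coalgebra structure: the product of two basis elements is a basis element or zero, and each
axiom reduces on basis elements to a composability check plus a quasigroupoid identity in
`A ⋈ H` (the cancellation laws give (d4-4)–(d4-7), `x λ(x) = id(t x)` and `λ(x) x = id(s x)`
give `Π^L` and `Π^R`).
-/

/-- A quasigroupoid: objects `O`, arrows `A`, with a partial product `mul`
(meaningful on composable pairs, i.e. when `s a = t b`) and inverse map `inv`.
All axioms involving the product are guarded by composability hypotheses. -/
structure Quasigroupoid (O : Type*) (A : Type*) where
  s : A → O
  t : A → O
  e : O → A
  inv : A → A
  mul : A → A → A
  s_e : ∀ x, s (e x) = x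
  t_e : ∀ x, t (e x) = x
  e_mul : ∀ a, mul (e (t a)) a = a
  mul_e : ∀ a, mul a (e (s a)) = a
  s_mul : ∀ a b, s a = t b → s (mul a b) = s b
  t_mul : ∀ a b, s a = t b → t (mul a b) = t a
  inv_comp_left : ∀ a b, s a = t b → s (inv a) = t (mul a b)
  inv_mul_cancel : ∀ a b, s a = t b → mul (inv a) (mul a b) = b
  comp_inv_right : ∀ a b, s a = t b → s (mul a b) = t (inv b)
  mul_inv_cancel : ∀ a b, s a = t b → mul (mul a b) (inv b) = a

/-- A matched pair of quasigroupoids with common base `O`: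
a left action `φA` of `H` on `A` and a right action `φH` of `A` on `H`
satisfying the module conditions and the matched pair compatibilities. -/
structure IsMatchedPair {O A1 H1 : Type*} (A : Quasigroupoid O A1) (H : Quasigroupoid O H1)
    (φA : H1 → A1 → A1) (φH : H1 → A1 → H1) : Prop where
  t_act : ∀ h a, H.s h = A.t a → A.t (φA h a) = H.t h
  act_mul : ∀ g h a, H.s g = H.t h → H.s h = A.t a → φA (H.mul g h) a = φA g (φA h a)
  act_id : ∀ a, φA (H.e (A.t a)) a = a
  s_act : ∀ h a, H.s h = A.t a → H.s (φH h a) = A.s a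
  actH_mul : ∀ h a b, H.s h = A.t a → A.s a = A.t b → φH h (A.mul a b) = φH (φH h a) b
  actH_id : ∀ h, φH h (A.e (H.s h)) = h
  compat_st : ∀ h a, H.s h = A.t a → A.s (φA h a) = H.t (φH h a)
  compat_mulA : ∀ h a b, H.s h = A.t a → A.s a = A.t b →
    φA h (A.mul a b) = A.mul (φA h a) (φA (φH h a) b)
  compat_mulH : ∀ g h a, H.s g = H.t h → H.s h = A.t a →
    φH (H.mul g h) a = H.mul (φH g (φA h a)) (φH h a)

open TensorProduct

/-- `s(λ a) = t a` in a quasigroupoid (derived from the axioms). -/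
theorem Quasigroupoid.s_inv' {O A1 : Type*} (Q : Quasigroupoid O A1) (a : A1) :
    Q.s (Q.inv a) = Q.t a := by
  have hc : Q.s a = Q.t (Q.e (Q.s a)) := (Q.t_e _).symm
  have h := Q.inv_comp_left a (Q.e (Q.s a)) hc
  rwa [Q.mul_e a] at h

/-- `t(λ a) = s a` in a quasigroupoid (derived from the axioms). -/
theorem Quasigroupoid.t_inv' {O A1 : Type*} (Q : Quasigroupoid O A1) (a : A1) :
    Q.t (Q.inv a) = Q.s a := by
  have hc : Q.s (Q.e (Q.t a)) = Q.t a := Q.s_e _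
  have h := Q.comp_inv_right (Q.e (Q.t a)) a hc
  rw [Q.e_mul a] at h
  exact h.symm

noncomputable section

variable (K : Type*) [Field K] {O A1 H1 : Type*} [Fintype O] [DecidableEq O]

/-- The arrows of the double cross product `A ⋈ H`: pairs `(a,h)` with `s_A a = t_H h`.
These index the basis of `K[A] ⋈ K[H]`. -/
abbrev BPair (A : Quasigroupoid O A1) (H : Quasigroupoid O H1) : Type _ :=
  {p : A1 × H1 // A.s p.1 = H.t p.2}

variable (A : Quasigroupoid O A1) (H : Quasigroupoid O H1)
  (φA : H1 → A1 → A1) (φH : H1 → A1 → H1)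

/-- Basis element `a ⊗ h` of `K[A] ⋈ K[H]`. -/
def pb (p : BPair A H) : BPair A H →₀ K := Finsupp.single p 1

/-- The grouplike element `id_A(x) ⊗ id_H(x)`. -/
def punit (x : O) : BPair A H := ⟨(A.e x, H.e x), by rw [A.s_e, H.t_e]⟩

/-- The product of `K[A] ⋈ K[H]`:
`(a ⊗ h)(b ⊗ g) = a•φA(h,b) ⊗ φH(h,b)⋆g` when `s_H h = t_A b`, and `0` otherwise. -/
def bmul (hmp : IsMatchedPair A H φA φH) :
    (BPair A H →₀ K) →ₗ[K] (BPair A H →₀ K) →ₗ[K] (BPair A H →₀ K) :=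
  Finsupp.lift ((BPair A H →₀ K) →ₗ[K] (BPair A H →₀ K)) K (BPair A H) fun p =>
    Finsupp.lift (BPair A H →₀ K) K (BPair A H) fun q =>
      if hc : H.s p.val.2 = A.t q.val.1 then
        Finsupp.single
          (⟨(A.mul p.val.1 (φA p.val.2 q.val.1), H.mul (φH p.val.2 q.val.1) q.val.2), by
            have h1 : A.s p.val.1 = A.t (φA p.val.2 q.val.1) := by
              rw [hmp.t_act _ _ hc]; exact p.2
            have h2 : H.s (φH p.val.2 q.val.1) = H.t q.val.2 := by
              rw [hmp.s_act _ _ hc]; exact q.2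
            rw [A.s_mul _ _ h1, H.t_mul _ _ h2]
            exact hmp.compat_st _ _ hc⟩ : BPair A H) 1
      else 0

/-- The unit `∑_{x ∈ A₀} id_A(x) ⊗ id_H(x)` of `K[A] ⋈ K[H]`. -/
def bone : BPair A H →₀ K := ∑ x : O, Finsupp.single (punit A H x) 1

/-- The coproduct: linear extension of `δ(a ⊗ h) = (a ⊗ h) ⊗ (a ⊗ h)`. -/
def bdelta : (BPair A H →₀ K) →ₗ[K] (BPair A H →₀ K) ⊗[K] (BPair A H →₀ K) :=
  Finsupp.lift ((BPair A H →₀ K) ⊗[K] (BPair A H →₀ K)) K (BPair A H) fun p =>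
    Finsupp.single p 1 ⊗ₜ[K] Finsupp.single p 1

/-- The counit: linear extension of `ε(a ⊗ h) = 1`. -/
def beps : (BPair A H →₀ K) →ₗ[K] K := Finsupp.lift K K (BPair A H) fun _ => 1

/-- The antipode: linear extension of
`λ(a ⊗ h) = φA(λ_H h, λ_A a) ⊗ φH(λ_H h, λ_A a)`. -/
def bS (hmp : IsMatchedPair A H φA φH) :
    (BPair A H →₀ K) →ₗ[K] (BPair A H →₀ K) :=
  Finsupp.lift (BPair A H →₀ K) K (BPair A H) fun p =>
    Finsupp.single
      (⟨(φA (H.inv p.val.2) (A.inv p.val.1), φH (H.inv p.val.2) (A.inv p.val.1)), by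
        have h1 : H.s (H.inv p.val.2) = A.t (A.inv p.val.1) := by
          rw [Quasigroupoid.s_inv', Quasigroupoid.t_inv']; exact p.2.symm
        exact hmp.compat_st _ _ h1⟩ : BPair A H) 1

/-- The target map: linear extension of `Π^L(a ⊗ h) = id_A(t_A a) ⊗ id_H(t_A a)`. -/
def bPiL : (BPair A H →₀ K) →ₗ[K] (BPair A H →₀ K) :=
  Finsupp.lift (BPair A H →₀ K) K (BPair A H) fun p =>
    Finsupp.single (punit A H (A.t p.val.1)) 1

/-- The source map: linear extension of `Π^R(a ⊗ h) = id_A(s_H h) ⊗ id_H(s_H h)`. -/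
def bPiR : (BPair A H →₀ K) →ₗ[K] (BPair A H →₀ K) :=
  Finsupp.lift (BPair A H →₀ K) K (BPair A H) fun p =>
    Finsupp.single (punit A H (H.s p.val.2)) 1

namespace Quasigroupoid

variable {O X : Type*} (Q : Quasigroupoid O X)

theorem inv_mul_self (a : X) : Q.mul (Q.inv a) a = Q.e (Q.s a) := by
  simpa only [Q.mul_e] using Q.inv_mul_cancel a (Q.e (Q.s a)) (Q.t_e _).symm

theorem mul_inv_self (a : X) : Q.mul a (Q.inv a) = Q.e (Q.t a) := by
  simpa only [Q.e_mul] using Q.mul_inv_cancel (Q.e (Q.t a)) a (Q.s_e _)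

theorem inv_inv (a : X) : Q.inv (Q.inv a) = a := by
  have h := Q.mul_inv_cancel a (Q.inv a) (Q.t_inv' a).symm
  rwa [Q.mul_inv_self, ← Q.s_inv' a, ← Q.t_inv' (Q.inv a), Q.e_mul] at h

theorem mul_inv_cancel_left {a b : X} (h : Q.t a = Q.t b) :
    Q.mul a (Q.mul (Q.inv a) b) = b := by
  simpa only [Q.inv_inv] using Q.inv_mul_cancel (Q.inv a) b ((Q.s_inv' a).trans h)

theorem inv_mul_cancel_right {a b : X} (h : Q.s a = Q.s b) :
    Q.mul (Q.mul a (Q.inv b)) b = a := by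
  simpa only [Q.inv_inv] using Q.mul_inv_cancel a (Q.inv b) (h.trans (Q.t_inv' b).symm)

theorem eq_inv_of_mul_eq_e_left {a b : X} (hc : Q.s a = Q.t b) (h : Q.mul a b = Q.e (Q.s b)) :
    a = Q.inv b := by
  have h' := Q.mul_inv_cancel a b hc
  rwa [h, ← Q.t_inv' b, Q.e_mul, eq_comm] at h'

theorem eq_inv_of_mul_eq_e_right {a b : X} (hc : Q.s a = Q.t b) (h : Q.mul a b = Q.e (Q.t a)) :
    b = Q.inv a := by
  have h' := Q.inv_mul_cancel a b hc
  rwa [h, ← Q.s_inv' a, Q.mul_e, eq_comm] at h'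

theorem eq_e_of_mul_self_eq {u : X} (hc : Q.s u = Q.t u) (h : Q.mul u u = u) :
    u = Q.e (Q.s u) := by
  have h' := Q.inv_mul_cancel u u hc
  rw [h, Q.inv_mul_self] at h'
  exact h'.symm

theorem e_mul_e (x : O) : Q.mul (Q.e x) (Q.e x) = Q.e x := by
  simpa only [Q.t_e] using Q.e_mul (Q.e x)

end Quasigroupoid

theorem BPair.s_inv_snd {O A1 H1 : Type*} {A : Quasigroupoid O A1} {H : Quasigroupoid O H1}
    (p : BPair A H) : H.s (H.inv p.1.2) = A.t (A.inv p.1.1) := by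
  rw [H.s_inv', A.t_inv', p.2]

namespace IsMatchedPair

variable {O A1 H1 : Type*} {A : Quasigroupoid O A1} {H : Quasigroupoid O H1}
  {φA : H1 → A1 → A1} {φH : H1 → A1 → H1} (hmp : IsMatchedPair A H φA φH)
include hmp

theorem actH_e (a : A1) : φH (H.e (A.t a)) a = H.e (A.s a) := by
  have hs : H.s (H.e (A.t a)) = A.t a := H.s_e _
  have hsu : H.s (φH (H.e (A.t a)) a) = A.s a := hmp.s_act _ _ hs
  have htu : H.t (φH (H.e (A.t a)) a) = A.s a := by
    simpa only [hmp.act_id] using (hmp.compat_st _ a hs).symm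
  have hidem := hmp.compat_mulH (H.e (A.t a)) (H.e (A.t a)) a (by rw [H.s_e, H.t_e]) hs
  rw [H.e_mul_e, hmp.act_id] at hidem
  rw [H.eq_e_of_mul_self_eq (hsu.trans htu.symm) hidem.symm, hsu]

theorem act_e (h : H1) : φA h (A.e (H.s h)) = A.e (H.t h) := by
  have ht : H.s h = A.t (A.e (H.s h)) := (A.t_e _).symm
  have htv : A.t (φA h (A.e (H.s h))) = H.t h := hmp.t_act _ _ ht
  have hsv : A.s (φA h (A.e (H.s h))) = H.t h := by
    simpa only [hmp.actH_id] using hmp.compat_st h _ ht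
  have hidem := hmp.compat_mulA h (A.e (H.s h)) (A.e (H.s h)) ht (by rw [A.s_e, A.t_e])
  rw [A.e_mul_e, hmp.actH_id] at hidem
  rw [A.eq_e_of_mul_self_eq (hsv.trans htv.symm) hidem.symm, hsv]

theorem act_inv_act {k : H1} {b : A1} (hc : H.s k = A.t b) : φA (H.inv k) (φA k b) = b := by
  rw [← hmp.act_mul _ _ _ (H.s_inv' k) hc, H.inv_mul_self, hc, hmp.act_id]

theorem act_act_inv {k : H1} {c : A1} (hc : H.t k = A.t c) : φA k (φA (H.inv k) c) = c := by
  simpa only [H.inv_inv] using hmp.act_inv_act ((H.s_inv' k).trans hc)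

theorem actH_inv_act {k : H1} {b : A1} (hc : H.s k = A.t b) :
    φH (H.inv k) (φA k b) = H.inv (φH k b) := by
  have h := hmp.compat_mulH (H.inv k) k b (H.s_inv' k) hc
  rw [H.inv_mul_self, hc, hmp.actH_e, ← hmp.s_act k b hc] at h
  refine H.eq_inv_of_mul_eq_e_left ?_ h.symm
  rw [hmp.s_act _ _ ((H.s_inv' k).trans (hmp.t_act k b hc).symm), hmp.compat_st k b hc]

theorem actH_act_inv {k : H1} {c : A1} (hc : H.t k = A.t c) :
    φH k (φA (H.inv k) c) = H.inv (φH (H.inv k) c) := by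
  simpa only [H.inv_inv] using hmp.actH_inv_act ((H.s_inv' k).trans hc)

theorem act_actH_inv {k : H1} {c : A1} (hc : H.s k = A.t c) :
    φA (φH k c) (A.inv c) = A.inv (φA k c) := by
  have h := hmp.compat_mulA k c (A.inv c) hc (A.t_inv' c).symm
  rw [A.mul_inv_self, ← hc, hmp.act_e, ← hmp.t_act k c hc] at h
  refine A.eq_inv_of_mul_eq_e_right ?_ h.symm
  rw [hmp.compat_st k c hc, hmp.t_act _ _ ((hmp.s_act k c hc).trans (A.t_inv' c).symm)]

theorem actH_actH_inv {k : H1} {c : A1} (hc : H.s k = A.t c) : φH (φH k c) (A.inv c) = k := by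
  have h := hmp.actH_mul k c (A.inv c) hc (A.t_inv' c).symm
  rwa [A.mul_inv_self, ← hc, hmp.actH_id, eq_comm] at h

def bowtieInv (p : BPair A H) : BPair A H :=
  ⟨(φA (H.inv p.1.2) (A.inv p.1.1), φH (H.inv p.1.2) (A.inv p.1.1)),
    hmp.compat_st _ _ p.s_inv_snd⟩

theorem s_bowtieInv (p : BPair A H) : H.s (hmp.bowtieInv p).1.2 = A.t p.1.1 := by
  rw [bowtieInv, hmp.s_act _ _ p.s_inv_snd, A.s_inv']

theorem t_bowtieInv (p : BPair A H) : A.t (hmp.bowtieInv p).1.1 = H.s p.1.2 := by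
  rw [bowtieInv, hmp.t_act _ _ p.s_inv_snd, H.t_inv']

variable [DecidableEq O]

/-- On non-composable pairs the value is junk (the left factor). -/
def bowtieMul (p q : BPair A H) : BPair A H :=
  if hc : H.s p.1.2 = A.t q.1.1 then
    ⟨(A.mul p.1.1 (φA p.1.2 q.1.1), H.mul (φH p.1.2 q.1.1) q.1.2), by
      rw [A.s_mul _ _ (p.2.trans (hmp.t_act _ _ hc).symm),
        H.t_mul _ _ ((hmp.s_act _ _ hc).trans q.2)]
      exact hmp.compat_st _ _ hc⟩
  else p

theorem bowtieMul_val {p q : BPair A H} (hc : H.s p.1.2 = A.t q.1.1) :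
    (hmp.bowtieMul p q).1 = (A.mul p.1.1 (φA p.1.2 q.1.1), H.mul (φH p.1.2 q.1.1) q.1.2) := by
  rw [bowtieMul, dif_pos hc]

theorem s_bowtieMul {p q : BPair A H} (hc : H.s p.1.2 = A.t q.1.1) :
    H.s (hmp.bowtieMul p q).1.2 = H.s q.1.2 := by
  rw [hmp.bowtieMul_val hc, H.s_mul _ _ ((hmp.s_act _ _ hc).trans q.2)]

theorem t_bowtieMul {p q : BPair A H} (hc : H.s p.1.2 = A.t q.1.1) :
    A.t (hmp.bowtieMul p q).1.1 = A.t p.1.1 := by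
  rw [hmp.bowtieMul_val hc, A.t_mul _ _ (p.2.trans (hmp.t_act _ _ hc).symm)]

theorem e_bowtieMul (q : BPair A H) : hmp.bowtieMul (punit A H (A.t q.1.1)) q = q := by
  refine Subtype.ext ?_
  rw [hmp.bowtieMul_val (H.s_e _)]
  simp only [punit, hmp.act_id, hmp.actH_e, A.e_mul, q.2, H.e_mul]

theorem bowtieMul_e (p : BPair A H) : hmp.bowtieMul p (punit A H (H.s p.1.2)) = p := by
  refine Subtype.ext ?_
  rw [hmp.bowtieMul_val (A.t_e _).symm]
  simp only [punit, hmp.act_e, hmp.actH_id, ← p.2, A.mul_e, H.mul_e]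

theorem bowtieInv_mul_cancel {p q : BPair A H} (hc : H.s p.1.2 = A.t q.1.1) :
    hmp.bowtieMul (hmp.bowtieInv p) (hmp.bowtieMul p q) = q := by
  refine Subtype.ext ?_
  rw [hmp.bowtieMul_val ((hmp.s_bowtieInv p).trans (hmp.t_bowtieMul hc).symm),
    hmp.bowtieMul_val hc]
  obtain ⟨⟨a, h⟩, hp⟩ := p
  obtain ⟨⟨b, g⟩, hq⟩ := q
  dsimp only [bowtieInv] at hp hq hc ⊢
  have hab : A.s a = A.t (φA h b) := hp.trans (hmp.t_act h b hc).symm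
  have hinv : H.s (H.inv h) = A.t (A.inv a) := by rw [H.s_inv', A.t_inv', hp]
  have hcomp : A.s (A.inv a) = A.t (A.mul a (φA h b)) := by rw [A.s_inv', A.t_mul _ _ hab]
  rw [← hmp.compat_mulA _ _ _ hinv hcomp, ← hmp.actH_mul _ _ _ hinv hcomp,
    A.inv_mul_cancel a _ hab, hmp.act_inv_act hc, hmp.actH_inv_act hc,
    H.inv_mul_cancel _ _ ((hmp.s_act h b hc).trans hq)]

theorem bowtieMul_inv_cancel {p q : BPair A H} (hc : H.s p.1.2 = A.t q.1.1) :
    hmp.bowtieMul (hmp.bowtieMul p q) (hmp.bowtieInv q) = p := by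
  refine Subtype.ext ?_
  rw [hmp.bowtieMul_val ((hmp.s_bowtieMul hc).trans (hmp.t_bowtieInv q).symm),
    hmp.bowtieMul_val hc]
  obtain ⟨⟨a, h⟩, hp⟩ := p
  obtain ⟨⟨b, g⟩, hq⟩ := q
  dsimp only [bowtieInv] at hp hq hc ⊢
  have hab : A.s a = A.t (φA h b) := hp.trans (hmp.t_act h b hc).symm
  have hhg : H.s (φH h b) = H.t g := (hmp.s_act h b hc).trans hq
  have hgb : H.t g = A.t (A.inv b) := by rw [A.t_inv', hq]
  have hinv : H.s (H.inv g) = A.t (A.inv b) := by rw [H.s_inv', hgb]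
  have hg : H.s g = A.t (φA (H.inv g) (A.inv b)) := by rw [hmp.t_act _ _ hinv, H.t_inv']
  have hhk : H.s h = H.s (φH (H.inv g) (A.inv b)) := by rw [hmp.s_act _ _ hinv, A.s_inv', hc]
  rw [hmp.act_mul _ _ _ hhg hg, hmp.compat_mulH _ _ _ hhg hg, hmp.act_act_inv hgb,
    hmp.actH_act_inv hgb, hmp.act_actH_inv hc, hmp.actH_actH_inv hc,
    A.mul_inv_cancel a _ hab, H.inv_mul_cancel_right hhk]

/-- The double cross product quasigroupoid `A ⋈ H`. -/
def bowtie : Quasigroupoid O (BPair A H) where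
  s p := H.s p.1.2
  t p := A.t p.1.1
  e := punit A H
  inv := hmp.bowtieInv
  mul := hmp.bowtieMul
  s_e := H.s_e
  t_e := A.t_e
  e_mul := hmp.e_bowtieMul
  mul_e := hmp.bowtieMul_e
  s_mul _ _ := hmp.s_bowtieMul
  t_mul _ _ := hmp.t_bowtieMul
  inv_comp_left p _ hc := (hmp.s_bowtieInv p).trans (hmp.t_bowtieMul hc).symm
  inv_mul_cancel _ _ := hmp.bowtieInv_mul_cancel
  comp_inv_right _ q hc := (hmp.s_bowtieMul hc).trans (hmp.t_bowtieInv q).symm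
  mul_inv_cancel _ _ := hmp.bowtieMul_inv_cancel

end IsMatchedPair

section Basis

variable {K A H φA φH}

omit [Fintype O] [DecidableEq O]

theorem bPiL_pb (p : BPair A H) : bPiL K A H (pb K A H p) = pb K A H (punit A H (A.t p.1.1)) := by
  simp only [bPiL, pb, Finsupp.lift_apply, zero_smul, Finsupp.sum_single_index, one_smul]

theorem bPiR_pb (p : BPair A H) : bPiR K A H (pb K A H p) = pb K A H (punit A H (H.s p.1.2)) := by
  simp only [bPiR, pb, Finsupp.lift_apply, zero_smul, Finsupp.sum_single_index, one_smul]

theorem bdelta_pb (p : BPair A H) : bdelta K A H (pb K A H p) = pb K A H p ⊗ₜ pb K A H p := by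
  simp only [bdelta, pb, Finsupp.lift_apply, zero_smul, Finsupp.sum_single_index, one_smul]

theorem beps_pb (p : BPair A H) : beps K A H (pb K A H p) = 1 := by
  simp only [beps, pb, Finsupp.lift_apply, zero_smul, Finsupp.sum_single_index, one_smul]

theorem bS_pb (hmp : IsMatchedPair A H φA φH) (p : BPair A H) :
    bS K A H φA φH hmp (pb K A H p) = pb K A H (hmp.bowtieInv p) := by
  simp only [bS, pb, Finsupp.lift_apply, zero_smul, Finsupp.sum_single_index, one_smul]
  rfl

end Basis

section Coalgebra

variable {K A H}

omit [Fintype O] [DecidableEq O]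

theorem bdelta_coassoc (v : BPair A H →₀ K) :
    TensorProduct.assoc K _ _ _ (TensorProduct.map (bdelta K A H) LinearMap.id (bdelta K A H v)) =
      TensorProduct.map LinearMap.id (bdelta K A H) (bdelta K A H v) := by
  induction v using Finsupp.induction_linear with
  | zero => simp
  | add f g hf hg => simp only [map_add, hf, hg]
  | single p c => simp [bdelta, TensorProduct.smul_tmul']

theorem lid_map_beps_bdelta (v : BPair A H →₀ K) :
    TensorProduct.lid K _ (TensorProduct.map (beps K A H) LinearMap.id (bdelta K A H v)) = v := by
  induction v using Finsupp.induction_linear with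
  | zero => simp
  | add f g hf hg => simp only [map_add, hf, hg]
  | single p c => simp [bdelta, beps]

theorem rid_map_beps_bdelta (v : BPair A H →₀ K) :
    TensorProduct.rid K _ (TensorProduct.map LinearMap.id (beps K A H) (bdelta K A H v)) = v := by
  induction v using Finsupp.induction_linear with
  | zero => simp
  | add f g hf hg => simp only [map_add, hf, hg]
  | single p c => simp [bdelta, beps]

theorem comm_bdelta (v : BPair A H →₀ K) :
    TensorProduct.comm K _ _ (bdelta K A H v) = bdelta K A H v := by
  induction v using Finsupp.induction_linear with
  | zero => simp
  | add f g hf hg => simp only [map_add, hf, hg]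
  | single p c => simp [bdelta]

end Coalgebra

section Product

variable {K A H φA φH} (hmp : IsMatchedPair A H φA φH)

omit [Fintype O]

theorem bmul_pb_pb (p q : BPair A H) :
    bmul K A H φA φH hmp (pb K A H p) (pb K A H q) =
      if H.s p.1.2 = A.t q.1.1 then pb K A H (hmp.bowtieMul p q) else 0 := by
  simp only [bmul, pb, Finsupp.lift_apply, zero_smul, Finsupp.sum_single_index, one_smul,
    IsMatchedPair.bowtieMul]
  split_ifs <;> rfl

theorem bmul_punit_pb (x : O) (q : BPair A H) :
    bmul K A H φA φH hmp (pb K A H (punit A H x)) (pb K A H q) =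
      if x = A.t q.1.1 then pb K A H q else 0 := by
  rw [bmul_pb_pb, show H.s (punit A H x).1.2 = x from H.s_e x]
  split_ifs with hx
  · subst hx
    exact congrArg _ (hmp.bowtie.e_mul q)
  · rfl

theorem bmul_pb_punit (p : BPair A H) (x : O) :
    bmul K A H φA φH hmp (pb K A H p) (pb K A H (punit A H x)) =
      if H.s p.1.2 = x then pb K A H p else 0 := by
  rw [bmul_pb_pb, show A.t (punit A H x).1.1 = x from A.t_e x]
  split_ifs with hx
  · subst hx
    exact congrArg _ (hmp.bowtie.mul_e p)
  · rfl

theorem bmul_punit_punit (x y : O) :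
    bmul K A H φA φH hmp (pb K A H (punit A H x)) (pb K A H (punit A H y)) =
      if x = y then pb K A H (punit A H y) else 0 := by
  rw [bmul_punit_pb, show A.t (punit A H y).1.1 = y from A.t_e y]

theorem bdelta_bmul_pb_pb (p q : BPair A H) :
    bdelta K A H (bmul K A H φA φH hmp (pb K A H p) (pb K A H q)) =
      bmul K A H φA φH hmp (pb K A H p) (pb K A H q) ⊗ₜ
        bmul K A H φA φH hmp (pb K A H p) (pb K A H q) := by
  rw [bmul_pb_pb]
  split_ifs
  · exact bdelta_pb _
  · simp

theorem beps_bmul_pb_pb (p q : BPair A H) :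
    beps K A H (bmul K A H φA φH hmp (pb K A H p) (pb K A H q)) =
      if H.s p.1.2 = A.t q.1.1 then 1 else 0 := by
  rw [bmul_pb_pb, apply_ite (beps K A H), beps_pb, map_zero]

theorem beps_bmul_bmul_pb (p q r : BPair A H) :
    beps K A H (bmul K A H φA φH hmp (bmul K A H φA φH hmp (pb K A H p) (pb K A H q))
      (pb K A H r)) = if H.s p.1.2 = A.t q.1.1 ∧ H.s q.1.2 = A.t r.1.1 then 1 else 0 := by
  rw [bmul_pb_pb]
  by_cases hpq : H.s p.1.2 = A.t q.1.1
  · rw [if_pos hpq, beps_bmul_pb_pb]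
    exact if_congr (by rw [hmp.s_bowtieMul hpq]; tauto) rfl rfl
  · simp [hpq]

theorem beps_bmul_pb_bmul (p q r : BPair A H) :
    beps K A H (bmul K A H φA φH hmp (pb K A H p)
      (bmul K A H φA φH hmp (pb K A H q) (pb K A H r))) =
      if H.s p.1.2 = A.t q.1.1 ∧ H.s q.1.2 = A.t r.1.1 then 1 else 0 := by
  rw [bmul_pb_pb hmp q]
  by_cases hqr : H.s q.1.2 = A.t r.1.1
  · rw [if_pos hqr, beps_bmul_pb_pb]
    exact if_congr (by rw [hmp.t_bowtieMul hqr]; tauto) rfl rfl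
  · simp [hqr]

theorem bmul_pb_bS_pb (p : BPair A H) :
    bmul K A H φA φH hmp (pb K A H p) (bS K A H φA φH hmp (pb K A H p)) =
      bPiL K A H (pb K A H p) := by
  rw [bS_pb, bmul_pb_pb, if_pos (hmp.t_bowtieInv p).symm, bPiL_pb]
  exact congrArg _ (hmp.bowtie.mul_inv_self p)

theorem bmul_bS_pb_pb (p : BPair A H) :
    bmul K A H φA φH hmp (bS K A H φA φH hmp (pb K A H p)) (pb K A H p) =
      bPiR K A H (pb K A H p) := by
  rw [bS_pb, bmul_pb_pb, if_pos (hmp.s_bowtieInv p), bPiR_pb]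
  exact congrArg _ (hmp.bowtie.inv_mul_self p)

theorem bmul_bS_bPiL (p : BPair A H) :
    bmul K A H φA φH hmp (bS K A H φA φH hmp (pb K A H p)) (bPiL K A H (pb K A H p)) =
      bS K A H φA φH hmp (pb K A H p) := by
  rw [bS_pb, bPiL_pb, bmul_pb_punit, if_pos (hmp.s_bowtieInv p)]

theorem bmul_bPiR_bS (p : BPair A H) :
    bmul K A H φA φH hmp (bPiR K A H (pb K A H p)) (bS K A H φA φH hmp (pb K A H p)) =
      bS K A H φA φH hmp (pb K A H p) := by
  rw [bS_pb, bPiR_pb, bmul_punit_pb, if_pos (hmp.t_bowtieInv p).symm]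

theorem bmul_bS_bmul_eq_bmul_bPiR (p q : BPair A H) :
    bmul K A H φA φH hmp (bS K A H φA φH hmp (pb K A H p))
        (bmul K A H φA φH hmp (pb K A H p) (pb K A H q)) =
      bmul K A H φA φH hmp (bPiR K A H (pb K A H p)) (pb K A H q) := by
  rw [bS_pb, bPiR_pb, bmul_punit_pb, bmul_pb_pb hmp p]
  split_ifs with hc
  · rw [bmul_pb_pb, hmp.s_bowtieInv, hmp.t_bowtieMul hc, if_pos rfl]
    exact congrArg _ (hmp.bowtie.inv_mul_cancel p q hc)
  · exact map_zero _

theorem bmul_pb_bmul_bS_eq_bmul_bPiL (p q : BPair A H) :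
    bmul K A H φA φH hmp (pb K A H p)
        (bmul K A H φA φH hmp (bS K A H φA φH hmp (pb K A H p)) (pb K A H q)) =
      bmul K A H φA φH hmp (bPiL K A H (pb K A H p)) (pb K A H q) := by
  rw [bS_pb, bPiL_pb, bmul_punit_pb, bmul_pb_pb hmp _ q, hmp.s_bowtieInv]
  split_ifs with hc
  · rw [bmul_pb_pb, hmp.t_bowtieMul ((hmp.s_bowtieInv p).trans hc), hmp.t_bowtieInv, if_pos rfl]
    exact congrArg _ (hmp.bowtie.mul_inv_cancel_left hc)
  · exact map_zero _

theorem bmul_bmul_pb_bS_eq_bmul_bPiL (p q : BPair A H) :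
    bmul K A H φA φH hmp (bmul K A H φA φH hmp (pb K A H q) (pb K A H p))
        (bS K A H φA φH hmp (pb K A H p)) =
      bmul K A H φA φH hmp (pb K A H q) (bPiL K A H (pb K A H p)) := by
  rw [bS_pb, bPiL_pb, bmul_pb_punit, bmul_pb_pb hmp q]
  split_ifs with hc
  · rw [bmul_pb_pb, hmp.s_bowtieMul hc, hmp.t_bowtieInv, if_pos rfl]
    exact congrArg _ (hmp.bowtie.mul_inv_cancel q p hc)
  · rw [map_zero, LinearMap.zero_apply]

theorem bmul_bmul_bS_pb_eq_bmul_bPiR (p q : BPair A H) :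
    bmul K A H φA φH hmp (bmul K A H φA φH hmp (pb K A H q) (bS K A H φA φH hmp (pb K A H p)))
        (pb K A H p) =
      bmul K A H φA φH hmp (pb K A H q) (bPiR K A H (pb K A H p)) := by
  rw [bS_pb, bPiR_pb, bmul_pb_punit, bmul_pb_pb hmp q, hmp.t_bowtieInv]
  split_ifs with hc
  · rw [bmul_pb_pb, hmp.s_bowtieMul ((hmp.t_bowtieInv p).trans hc.symm).symm, hmp.s_bowtieInv,
      if_pos rfl]
    exact congrArg _ (hmp.bowtie.inv_mul_cancel_right hc)
  · rw [map_zero, LinearMap.zero_apply]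

end Product

section Unit

variable {K A H φA φH} (hmp : IsMatchedPair A H φA φH)

theorem bmul_bone_pb (p : BPair A H) :
    bmul K A H φA φH hmp (bone K A H) (pb K A H p) = pb K A H p := by
  change bmul K A H φA φH hmp (∑ x, pb K A H (punit A H x)) (pb K A H p) = pb K A H p
  simp only [map_sum, LinearMap.sum_apply, bmul_punit_pb, Finset.sum_ite_eq', Finset.mem_univ,
    if_true]

theorem bmul_pb_bone (p : BPair A H) :
    bmul K A H φA φH hmp (pb K A H p) (bone K A H) = pb K A H p := by
  change bmul K A H φA φH hmp (pb K A H p) (∑ x, pb K A H (punit A H x)) = pb K A H p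
  simp only [map_sum, bmul_pb_punit, Finset.sum_ite_eq, Finset.mem_univ, if_true]

theorem bmul_bone_left (f : BPair A H →₀ K) : bmul K A H φA φH hmp (bone K A H) f = f :=
  LinearMap.congr_fun (g := LinearMap.id)
    (Finsupp.lhom_ext' fun p => LinearMap.ext_ring (bmul_bone_pb hmp p)) f

theorem bmul_bone_right (f : BPair A H →₀ K) : bmul K A H φA φH hmp f (bone K A H) = f :=
  LinearMap.congr_fun (f := (bmul K A H φA φH hmp).flip (bone K A H)) (g := LinearMap.id)
    (Finsupp.lhom_ext' fun p => LinearMap.ext_ring (bmul_pb_bone hmp p)) f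

theorem bPiL_pb_eq_sum (p : BPair A H) :
    bPiL K A H (pb K A H p) =
      ∑ x : O, beps K A H (bmul K A H φA φH hmp (pb K A H (punit A H x)) (pb K A H p)) •
        pb K A H (punit A H x) := by
  simp only [bPiL_pb, bmul_punit_pb, apply_ite (beps K A H), beps_pb, map_zero, ite_smul,
    one_smul, zero_smul, Finset.sum_ite_eq', Finset.mem_univ, if_true]

theorem bPiR_pb_eq_sum (p : BPair A H) :
    bPiR K A H (pb K A H p) =
      ∑ x : O, beps K A H (bmul K A H φA φH hmp (pb K A H p) (pb K A H (punit A H x))) •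
        pb K A H (punit A H x) := by
  simp only [bPiR_pb, bmul_pb_punit, apply_ite (beps K A H), beps_pb, map_zero, ite_smul,
    one_smul, zero_smul, Finset.sum_ite_eq, Finset.mem_univ, if_true]

theorem sum_pb_punit_tmul_eq_sum_bmul_left :
    (∑ x : O, pb K A H (punit A H x) ⊗ₜ[K]
        (pb K A H (punit A H x) ⊗ₜ[K] pb K A H (punit A H x))) =
      ∑ x : O, ∑ y : O, pb K A H (punit A H x) ⊗ₜ[K]
        (bmul K A H φA φH hmp (pb K A H (punit A H x)) (pb K A H (punit A H y)) ⊗ₜ[K]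
          pb K A H (punit A H y)) := by
  simp only [bmul_punit_punit, TensorProduct.ite_tmul,
    TensorProduct.tmul_ite, Finset.sum_ite_eq, Finset.mem_univ, if_true]

theorem sum_pb_punit_tmul_eq_sum_bmul_right :
    (∑ x : O, pb K A H (punit A H x) ⊗ₜ[K]
        (pb K A H (punit A H x) ⊗ₜ[K] pb K A H (punit A H x))) =
      ∑ x : O, ∑ y : O, pb K A H (punit A H x) ⊗ₜ[K]
        (bmul K A H φA φH hmp (pb K A H (punit A H y)) (pb K A H (punit A H x)) ⊗ₜ[K]
          pb K A H (punit A H y)) := by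
  simp only [bmul_punit_punit, TensorProduct.ite_tmul,
    TensorProduct.tmul_ite, Finset.sum_ite_eq', Finset.mem_univ, if_true]

end Unit

/-- For a matched pair of finite quasigroupoids, `K[A] ⋈ K[H]` is a cocommutative
weak Hopf quasigroup with the stated product, unit, counit, coproduct, antipode,
target map `Π^L(a⊗h) = id_A(t_A a) ⊗ id_H(t_A a)` and source map
`Π^R(a⊗h) = id_A(s_H h) ⊗ id_H(s_H h)` (axioms involving multilinear maps are
stated on basis elements, which determines them by (multi)linearity). -/
theorem bowtie_weakHopfQuasigroup (hmp : IsMatchedPair A H φA φH) :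
    -- unital magma
    (∀ f : BPair A H →₀ K,
      bmul K A H φA φH hmp (bone K A H) f = f ∧ bmul K A H φA φH hmp f (bone K A H) = f) ∧
    -- coalgebra: coassociativity
    (∀ v : BPair A H →₀ K,
      (TensorProduct.assoc K (BPair A H →₀ K) (BPair A H →₀ K) (BPair A H →₀ K))
        ((TensorProduct.map (bdelta K A H)
          (LinearMap.id : (BPair A H →₀ K) →ₗ[K] (BPair A H →₀ K))) (bdelta K A H v)) =
      (TensorProduct.map (LinearMap.id : (BPair A H →₀ K) →ₗ[K] (BPair A H →₀ K))
        (bdelta K A H)) (bdelta K A H v)) ∧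
    -- coalgebra: counit laws
    (∀ v : BPair A H →₀ K,
      (TensorProduct.lid K (BPair A H →₀ K))
        ((TensorProduct.map (beps K A H)
          (LinearMap.id : (BPair A H →₀ K) →ₗ[K] (BPair A H →₀ K))) (bdelta K A H v)) = v) ∧
    (∀ v : BPair A H →₀ K,
      (TensorProduct.rid K (BPair A H →₀ K))
        ((TensorProduct.map (LinearMap.id : (BPair A H →₀ K) →ₗ[K] (BPair A H →₀ K))
          (beps K A H)) (bdelta K A H v)) = v) ∧
    -- cocommutativity
    (∀ v : BPair A H →₀ K,
      (TensorProduct.comm K (BPair A H →₀ K) (BPair A H →₀ K)) (bdelta K A H v) =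
        bdelta K A H v) ∧
    -- (d1) on basis elements
    (∀ p q : BPair A H,
      bdelta K A H (bmul K A H φA φH hmp (pb K A H p) (pb K A H q)) =
        bmul K A H φA φH hmp (pb K A H p) (pb K A H q) ⊗ₜ[K]
          bmul K A H φA φH hmp (pb K A H p) (pb K A H q)) ∧
    -- (d2) on basis elements
    (∀ p q r : BPair A H,
      beps K A H (bmul K A H φA φH hmp
          (bmul K A H φA φH hmp (pb K A H p) (pb K A H q)) (pb K A H r)) =
        beps K A H (bmul K A H φA φH hmp (pb K A H p)
          (bmul K A H φA φH hmp (pb K A H q) (pb K A H r))) ∧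
      beps K A H (bmul K A H φA φH hmp
          (bmul K A H φA φH hmp (pb K A H p) (pb K A H q)) (pb K A H r)) =
        beps K A H (bmul K A H φA φH hmp (pb K A H p) (pb K A H q)) *
          beps K A H (bmul K A H φA φH hmp (pb K A H q) (pb K A H r))) ∧
    -- (d3)
    ((∑ x : O, pb K A H (punit A H x) ⊗ₜ[K]
        (pb K A H (punit A H x) ⊗ₜ[K] pb K A H (punit A H x))) =
      ∑ x : O, ∑ y : O, pb K A H (punit A H x) ⊗ₜ[K]
        (bmul K A H φA φH hmp (pb K A H (punit A H x)) (pb K A H (punit A H y)) ⊗ₜ[K]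
          pb K A H (punit A H y))) ∧
    ((∑ x : O, pb K A H (punit A H x) ⊗ₜ[K]
        (pb K A H (punit A H x) ⊗ₜ[K] pb K A H (punit A H x))) =
      ∑ x : O, ∑ y : O, pb K A H (punit A H x) ⊗ₜ[K]
        (bmul K A H φA φH hmp (pb K A H (punit A H y)) (pb K A H (punit A H x)) ⊗ₜ[K]
          pb K A H (punit A H y))) ∧
    -- Π^L = id ∗ λ and Π^R = λ ∗ id (on basis elements)
    (∀ p : BPair A H,
      bmul K A H φA φH hmp (pb K A H p) (bS K A H φA φH hmp (pb K A H p)) =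
        bPiL K A H (pb K A H p)) ∧
    (∀ p : BPair A H,
      bmul K A H φA φH hmp (bS K A H φA φH hmp (pb K A H p)) (pb K A H p) =
        bPiR K A H (pb K A H p)) ∧
    -- (d4-1) and (d4-2)
    (∀ p : BPair A H, bPiL K A H (pb K A H p) =
      ∑ x : O, beps K A H (bmul K A H φA φH hmp (pb K A H (punit A H x)) (pb K A H p)) •
        pb K A H (punit A H x)) ∧
    (∀ p : BPair A H, bPiR K A H (pb K A H p) =
      ∑ x : O, beps K A H (bmul K A H φA φH hmp (pb K A H p) (pb K A H (punit A H x))) •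
        pb K A H (punit A H x)) ∧
    -- (d4-3)
    (∀ p : BPair A H,
      bmul K A H φA φH hmp (bS K A H φA φH hmp (pb K A H p)) (bPiL K A H (pb K A H p)) =
        bS K A H φA φH hmp (pb K A H p) ∧
      bmul K A H φA φH hmp (bPiR K A H (pb K A H p)) (bS K A H φA φH hmp (pb K A H p)) =
        bS K A H φA φH hmp (pb K A H p)) ∧
    -- (d4-4)
    (∀ p q : BPair A H,
      bmul K A H φA φH hmp (bS K A H φA φH hmp (pb K A H p))
          (bmul K A H φA φH hmp (pb K A H p) (pb K A H q)) =
        bmul K A H φA φH hmp (bPiR K A H (pb K A H p)) (pb K A H q)) ∧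
    -- (d4-5)
    (∀ p q : BPair A H,
      bmul K A H φA φH hmp (pb K A H p)
          (bmul K A H φA φH hmp (bS K A H φA φH hmp (pb K A H p)) (pb K A H q)) =
        bmul K A H φA φH hmp (bPiL K A H (pb K A H p)) (pb K A H q)) ∧
    -- (d4-6)
    (∀ p q : BPair A H,
      bmul K A H φA φH hmp
          (bmul K A H φA φH hmp (pb K A H q) (pb K A H p)) (bS K A H φA φH hmp (pb K A H p)) =
        bmul K A H φA φH hmp (pb K A H q) (bPiL K A H (pb K A H p))) ∧
    -- (d4-7)
    (∀ p q : BPair A H,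
      bmul K A H φA φH hmp
          (bmul K A H φA φH hmp (pb K A H q) (bS K A H φA φH hmp (pb K A H p))) (pb K A H p) =
        bmul K A H φA φH hmp (pb K A H q) (bPiR K A H (pb K A H p))) ∧
    -- the explicit form of the target and source maps
    (∀ p : BPair A H, bPiL K A H (pb K A H p) = pb K A H (punit A H (A.t p.val.1))) ∧
    (∀ p : BPair A H, bPiR K A H (pb K A H p) = pb K A H (punit A H (H.s p.val.2))) := by
  refine ⟨fun f => ⟨bmul_bone_left hmp f, bmul_bone_right hmp f⟩, bdelta_coassoc,
    lid_map_beps_bdelta, rid_map_beps_bdelta, comm_bdelta, bdelta_bmul_pb_pb hmp,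
    fun p q r => ⟨?_, ?_⟩, sum_pb_punit_tmul_eq_sum_bmul_left hmp,
    sum_pb_punit_tmul_eq_sum_bmul_right hmp, bmul_pb_bS_pb hmp, bmul_bS_pb_pb hmp,
    bPiL_pb_eq_sum hmp, bPiR_pb_eq_sum hmp, fun p => ⟨bmul_bS_bPiL hmp p, bmul_bPiR_bS hmp p⟩,
    bmul_bS_bmul_eq_bmul_bPiR hmp, bmul_pb_bmul_bS_eq_bmul_bPiL hmp,
    bmul_bmul_pb_bS_eq_bmul_bPiL hmp, bmul_bmul_bS_pb_eq_bmul_bPiR hmp, bPiL_pb, bPiR_pb⟩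
  · rw [beps_bmul_bmul_pb, beps_bmul_pb_bmul]
  · rw [beps_bmul_bmul_pb, beps_bmul_pb_pb, beps_bmul_pb_pb, ite_zero_mul_ite_zero, mul_one]

end
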